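/- If pointed models (M,s) and (M',s') are ∘-bisimilar, then they satisfy exactly the same LEA-formulas (∘-bisimilarity implies ∘-equivalence). -/
import Mathlib


/-- The language LEA of essence and accident. -/
inductive LEAForm : Type
  | atom : ℕ → LEAForm
  | neg : LEAForm → LEAForm
  | and : LEAForm → LEAForm → LEAForm
  | ess : LEAForm → LEAForm

/-- A Kripke model (the frame is (W, R)). -/
structure Model (W : Type) where
  R : W → W → Prop
  V : ℕ → W → Prop

/-- Satisfaction for LEA. -/
def satLEA {W : Type} (M : Model W) : W → LEAForm → Prop
  | w, .atom p => M.V p w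
  | w, .neg φ => ¬ satLEA M w φ
  | w, .and φ ψ => satLEA M w φ ∧ satLEA M w ψ
  | w, .ess φ => satLEA M w φ → ∀ v, M.R w v → satLEA M v φ

def isCircBisim {W : Type} (M : Model W) (Z : W → W → Prop) : Prop :=
  (∃ a b, Z a b) ∧
  ∀ s s', Z s s' →
    ((∀ p, M.V p s ↔ M.V p s') ∧
     (∀ t, M.R s t → ¬ Z s t → ∃ t', M.R s' t' ∧ Z t t') ∧
     (∀ t', M.R s' t' → ¬ Z s' t' → ∃ t, M.R s t ∧ Z t t'))

/-- The disjoint union of two models. -/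
def dsum {W W' : Type} (M : Model W) (M' : Model W') : Model (W ⊕ W') where
  R x y :=
    match x, y with
    | Sum.inl a, Sum.inl b => M.R a b
    | Sum.inr a, Sum.inr b => M'.R a b
    | _, _ => False
  V p x :=
    match x with
    | Sum.inl a => M.V p a
    | Sum.inr a => M'.V p a

/-- (M,s) and (M',s') are ∘-bisimilar: some ∘-bisimulation on the disjoint
union of M and M' relates s to s'. -/
def circBisimilar {W W' : Type} (M : Model W) (s : W) (M' : Model W') (s' : W') : Prop :=
  ∃ Z, isCircBisim (dsum M M') Z ∧ Z (Sum.inl s) (Sum.inr s')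

lemma bisim_equiv {W : Type} (M : Model W) (Z : W → W → Prop)
    (hZ : isCircBisim M Z) :
    ∀ φ : LEAForm, ∀ a b, Z a b → (satLEA M a φ ↔ satLEA M b φ) := by
  intro φ
  induction φ with
  | atom p => intro a b hab; exact (hZ.2 a b hab).1 p
  | neg φ ih => intro a b hab; simp only [satLEA]; exact not_congr (ih a b hab)
  | and φ ψ ih1 ih2 =>
      intro a b hab; simp only [satLEA]
      exact and_congr (ih1 a b hab) (ih2 a b hab)
  | ess φ ih =>
      intro a b hab
      simp only [satLEA]
      constructor
      · intro ha hb v hbv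
        have haφ : satLEA M a φ := (ih a b hab).2 hb
        by_cases hz : Z b v
        · exact (ih b v hz).1 hb
        · obtain ⟨t, hat, htv⟩ := (hZ.2 a b hab).2.2 v hbv hz
          exact (ih t v htv).1 (ha haφ t hat)
      · intro hb ha v hav
        have hbφ : satLEA M b φ := (ih a b hab).1 ha
        by_cases hz : Z a v
        · exact (ih a v hz).1 ha
        · obtain ⟨t', hbt, hvt⟩ := (hZ.2 a b hab).2.1 v hav hz
          exact (ih v t' hvt).2 (hb hbφ t' hbt)

lemma sat_inl {W W' : Type} (M : Model W) (M' : Model W') :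
    ∀ φ : LEAForm, ∀ w : W, satLEA (dsum M M') (Sum.inl w) φ ↔ satLEA M w φ := by
  intro φ
  induction φ with
  | atom p => intro w; rfl
  | neg φ ih => intro w; exact not_congr (ih w)
  | and φ ψ ih1 ih2 => intro w; exact and_congr (ih1 w) (ih2 w)
  | ess φ ih =>
      intro w
      simp only [satLEA]
      constructor
      · intro h hw v hv
        exact (ih v).1 (h ((ih w).2 hw) (Sum.inl v) hv)
      · intro h hw v hv
        match v, hv with
        | Sum.inl v, hv => exact (ih v).2 (h ((ih w).1 hw) v hv)

lemma sat_inr {W W' : Type} (M : Model W) (M' : Model W') :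
    ∀ φ : LEAForm, ∀ w : W', satLEA (dsum M M') (Sum.inr w) φ ↔ satLEA M' w φ := by
  intro φ
  induction φ with
  | atom p => intro w; rfl
  | neg φ ih => intro w; exact not_congr (ih w)
  | and φ ψ ih1 ih2 => intro w; exact and_congr (ih1 w) (ih2 w)
  | ess φ ih =>
      intro w
      simp only [satLEA]
      constructor
      · intro h hw v hv
        exact (ih v).1 (h ((ih w).2 hw) (Sum.inr v) hv)
      · intro h hw v hv
        match v, hv with
        | Sum.inr v, hv => exact (ih v).2 (h ((ih w).1 hw) v hv)

/-- ∘-bisimilarity implies ∘-equivalence: ∘-bisimilar pointed models satisfy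
the same LEA-formulas. -/
theorem stmt12 (W W' : Type) [Nonempty W] [Nonempty W']
    (M : Model W) (M' : Model W') (s : W) (s' : W')
    (h : circBisimilar M s M' s') :
    ∀ φ : LEAForm, satLEA M s φ ↔ satLEA M' s' φ := by
  obtain ⟨Z, hZ, hss⟩ := h
  intro φ
  have := bisim_equiv (dsum M M') Z hZ φ _ _ hss
  rw [sat_inl, sat_inr] at this
  exact this
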